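/- (Interpolation between U^p and U^q via V^p.) Let 1 < p < q < ∞. There is a constant C such that for every right-continuous v ∈ V^p and every M > 1 there exist u ∈ U^p and w ∈ U^q with v = u + w and (1/M)‖u‖_{U^p} + e^{M}‖w‖_{U^q} ≤ C ‖v‖_{V^p}. In particular, V^p_{rc} ⊂ U^q with a norm bound. -/

import Mathlib

open MeasureTheory Set Filter

/-- `p`-variation sums of `v` on the whole line (convention `v(+∞) = 0`). -/
def varSumsR (p : ℝ) (v : ℝ → ℂ) : Set ℝ :=
  { S | ∃ (N : ℕ) (t : ℕ → ℝ), StrictMono t ∧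
      S = (∑ j ∈ Finset.range N, ‖v (t (j + 1)) - v (t j)‖ ^ p + ‖v (t N)‖ ^ p) ^ p⁻¹ }

/-- The `V^p(ℝ)` norm. -/
noncomputable def VpNormR (p : ℝ) (v : ℝ → ℂ) : ℝ := sSup (varSumsR p v)

/-- A `U^p` atom on `ℝ`. -/
def IsUpAtomR (p : ℝ) (u : ℝ → ℂ) : Prop :=
  ∃ (N : ℕ) (t : ℕ → ℝ) (φ : ℕ → ℂ),
    StrictMono t ∧ (∑ j ∈ Finset.range N, ‖φ j‖ ^ p) ≤ 1 ∧
      ∀ x : ℝ, u x = ∑ j ∈ Finset.range N,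
        if t j ≤ x ∧ (j + 1 = N ∨ x < t (j + 1)) then φ j else 0

/-- Sums `Σ_j |c_j|` over `ℓ¹`-atomic decompositions of `u` on `ℝ`. -/
def upDecompSumsR (p : ℝ) (u : ℝ → ℂ) : Set ℝ :=
  { S | ∃ (c : ℕ → ℂ) (A : ℕ → ℝ → ℂ),
      (∀ j, IsUpAtomR p (A j)) ∧ Summable (fun j => ‖c j‖) ∧
      (∀ x : ℝ, HasSum (fun j => c j * A j x) (u x)) ∧
      S = ∑' j, ‖c j‖ }

/-- The `U^p(ℝ)` (atomic) norm. -/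
noncomputable def UpNormR (p : ℝ) (u : ℝ → ℂ) : ℝ := sInf (upDecompSumsR p u)

/-!
Let `ω(x)` be the `p`-variation of `v` on `(-∞, x]`. It increases from `0` to at most
`‖v‖_{V^p} ^ p`, and `ω(x) + ‖v y - v x‖ ^ p ≤ ω(y)` for `x < y`. Sampling `v` at the times where
`ω` first reaches the levels `i 2⁻ᵏ ‖v‖_{V^p} ^ p` (`0 < i < 2ᵏ`) gives a right-continuous step
function `g_k` with fewer than `2ᵏ` jumps and `‖v - g_k‖_∞ ≤ 2 ^ (-k / p) ‖v‖_{V^p}`. So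
`g_{k+1} - g_k` is `≲ 2 ^ (k (1 / r - 1 / p)) ‖v‖_{V^p}` times a `U^r` atom (`r = p, q`), and with
`u = g_K = ∑_{k<K} (g_{k+1} - g_k)`, `w = v - g_K = ∑_{k≥K} (g_{k+1} - g_k)` we get
`‖u‖_{U^p} ≲ K ‖v‖_{V^p}` and `‖w‖_{U^q} ≲ 2 ^ (-K (1 / p - 1 / q)) ‖v‖_{V^p}`; the choice
`K ≈ M / ((1 / p - 1 / q) log 2)` balances the two terms.
-/

namespace VpInterpolation

open Finset
open scoped Classical

/-- `∑_{j < N} φ j 𝟙_{[t j, t (j + 1))}` with the last interval `[t (N - 1), ∞)`: the shape of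
the atoms of `U^r`. -/
noncomputable def stepSum (N : ℕ) (t : ℕ → ℝ) (φ : ℕ → ℂ) (x : ℝ) : ℂ :=
  ∑ j ∈ range N, if t j ≤ x ∧ (j + 1 = N ∨ x < t (j + 1)) then φ j else 0

lemma stepSum_eq {N j : ℕ} {t : ℕ → ℝ} (ht : StrictMono t) (φ : ℕ → ℂ) {x : ℝ} (hj : j < N)
    (hjx : t j ≤ x) (hxj : j + 1 = N ∨ x < t (j + 1)) : stepSum N t φ x = φ j := by
  rw [stepSum, sum_eq_single_of_mem j (mem_range.2 hj), if_pos ⟨hjx, hxj⟩]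
  intro i hi hij
  rw [if_neg]
  rintro ⟨hix, hxi⟩
  rcases lt_or_gt_of_ne hij with h | h
  · rcases hxi with h' | h'
    · omega
    · exact (h'.trans_le ((ht.monotone h).trans hjx)).false
  · rcases hxj with h' | h'
    · have := mem_range.1 hi; omega
    · exact (h'.trans_le ((ht.monotone h).trans hix)).false

lemma stepSum_const_mul (N : ℕ) (t : ℕ → ℝ) (φ : ℕ → ℂ) (c : ℂ) (x : ℝ) :
    stepSum N t (fun j => c * φ j) x = c * stepSum N t φ x := by
  simp only [stepSum, mul_sum, mul_ite, mul_zero]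

lemma _root_.Finset.exists_strictMono_enum (B : Finset ℝ) :
    ∃ t : ℕ → ℝ, StrictMono t ∧ ∀ b, b ∈ B ↔ ∃ j < #B, t j = b := by
  set e := B.orderEmbOfFin rfl
  set C := ∑ b ∈ B, |b|
  have he : ∀ i, e i ≤ C := fun i =>
    (le_abs_self _).trans (single_le_sum (fun b _ => abs_nonneg b) (B.orderEmbOfFin_mem rfl i))
  refine ⟨fun j => if h : j < #B then e ⟨j, h⟩ else C + j, fun i j hij => ?_,
    fun b => ⟨fun hb => ?_, ?_⟩⟩
  · by_cases hj : j < #B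
    · simp only [dif_pos hj, dif_pos (hij.trans hj)]
      exact e.strictMono hij
    by_cases hi : i < #B
    · have hj0 : (0 : ℝ) < j := by exact_mod_cast (show 0 < j by omega)
      simp only [dif_pos hi, dif_neg hj]
      linarith [he ⟨i, hi⟩]
    · simp only [dif_neg hi, dif_neg hj]
      linarith [show (i : ℝ) < j by exact_mod_cast hij]
  · obtain ⟨i, hi⟩ : b ∈ Set.range e := by rwa [B.range_orderEmbOfFin rfl]
    exact ⟨i, i.2, by simpa [i.2] using hi⟩
  · rintro ⟨j, hj, rfl⟩
    simp only [dif_pos hj]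
    exact B.orderEmbOfFin_mem rfl _

def IsStepFun (B : Finset ℝ) (f : ℝ → ℂ) : Prop :=
  (∀ x, (∀ b ∈ B, x < b) → f x = 0) ∧ ∀ x y, x ≤ y → (∀ b ∈ B, b ≤ y → b ≤ x) → f y = f x

namespace IsStepFun

variable {B B' : Finset ℝ} {f g : ℝ → ℂ}

lemma mono (hf : IsStepFun B f) (h : B ⊆ B') : IsStepFun B' f :=
  ⟨fun x hx => hf.1 x fun b hb => hx b (h hb),
    fun x y hxy hB => hf.2 x y hxy fun b hb => hB b (h hb)⟩

lemma sub (hf : IsStepFun B f) (hg : IsStepFun B g) : IsStepFun B (f - g) :=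
  ⟨fun x hx => by simp [hf.1 x hx, hg.1 x hx],
    fun x y hxy hB => by simp [hf.2 x y hxy hB, hg.2 x y hxy hB]⟩

lemma exists_eq_stepSum (hf : IsStepFun B f) :
    ∃ t : ℕ → ℝ, StrictMono t ∧ ∀ x, f x = stepSum #B t (fun j => f (t j)) x := by
  obtain ⟨t, ht, hB⟩ := B.exists_strictMono_enum
  refine ⟨t, ht, fun x => ?_⟩
  set F := (range #B).filter (fun j => t j ≤ x)
  rcases F.eq_empty_or_nonempty with hF | hF
  · have hlt : ∀ j < #B, x < t j := fun j hj =>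
      not_le.1 fun h => eq_empty_iff_forall_notMem.1 hF j (mem_filter.2 ⟨mem_range.2 hj, h⟩)
    rw [hf.1 x fun b hb => ?_, stepSum, sum_eq_zero fun j hj => if_neg fun h =>
      (hlt j (mem_range.1 hj)).not_ge h.1]
    obtain ⟨j, hj, rfl⟩ := (hB b).1 hb
    exact hlt j hj
  · obtain ⟨hJ, hJx⟩ := mem_filter.1 (F.max'_mem hF)
    have hmax : ∀ j < #B, t j ≤ x → j ≤ F.max' hF := fun j hj h =>
      F.le_max' j (mem_filter.2 ⟨mem_range.2 hj, h⟩)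
    rw [stepSum_eq ht _ (mem_range.1 hJ) hJx]
    · refine hf.2 _ _ hJx fun b hb hbx => ?_
      obtain ⟨j, hj, rfl⟩ := (hB b).1 hb
      exact ht.monotone (hmax j hj hbx)
    · by_contra! h
      have := hmax _ (by have := mem_range.1 hJ; omega) h.2
      omega

lemma exists_isUpAtomR (hf : IsStepFun B f) {r a : ℝ} (hr : 0 < r) (ha : ∀ x, ‖f x‖ ≤ a) {n : ℕ}
    (hn : #B ≤ n) : ∃ A, IsUpAtomR r A ∧ ∀ x, f x = ((n : ℝ) ^ r⁻¹ * a : ℝ) * A x := by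
  obtain ⟨t, ht, hft⟩ := hf.exists_eq_stepSum
  set c := (n : ℝ) ^ r⁻¹ * a
  have ha0 : 0 ≤ a := (norm_nonneg _).trans (ha 0)
  rcases (show 0 ≤ c by positivity).eq_or_lt with hc | hc
  · have hf0 : ∀ x, f x = 0 := by
      rcases mul_eq_zero.1 hc.symm with h | h
      · have hB : B = ∅ := by
          rw [Real.rpow_eq_zero (Nat.cast_nonneg n) (inv_ne_zero hr.ne'), Nat.cast_eq_zero] at h
          exact card_eq_zero.1 (Nat.le_zero.1 (h ▸ hn))
        exact fun x => hf.1 x (by simp [hB])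
      · exact fun x => norm_le_zero_iff.1 (h ▸ ha x)
    exact ⟨0, ⟨0, t, 0, ht, by simp, fun x => by simp⟩, fun x => by simp [hf0]⟩
  have hn0 : (0 : ℝ) < n := by
    by_contra! h
    simp [c, le_antisymm h (Nat.cast_nonneg n), Real.zero_rpow (inv_ne_zero hr.ne')] at hc
  have ha' : a ≠ 0 := by rintro rfl; simp [c] at hc
  have hterm : ∀ y, ‖(c : ℂ)⁻¹ * f y‖ ^ r ≤ (n : ℝ)⁻¹ := fun y => by
    calc ‖(c : ℂ)⁻¹ * f y‖ ^ r ≤ (c⁻¹ * a) ^ r := by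
          rw [norm_mul, norm_inv, Complex.norm_real, Real.norm_of_nonneg hc.le]
          gcongr
          exact ha y
      _ = (n : ℝ)⁻¹ := by
          rw [mul_inv, inv_mul_cancel_right₀ ha', Real.inv_rpow (by positivity),
            Real.rpow_inv_rpow hn0.le hr.ne']
  refine ⟨fun x => (c : ℂ)⁻¹ * f x, ⟨#B, t, fun j => (c : ℂ)⁻¹ * f (t j), ht, ?_, fun x => ?_⟩,
    fun x => (mul_inv_cancel_left₀ (by exact_mod_cast hc.ne') (f x)).symm⟩
  · calc ∑ j ∈ range #B, ‖(c : ℂ)⁻¹ * f (t j)‖ ^ r ≤ ∑ j ∈ range #B, (n : ℝ)⁻¹ :=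
          sum_le_sum fun j _ => hterm (t j)
      _ ≤ 1 := by
          rw [sum_const, card_range, nsmul_eq_mul, ← div_eq_mul_inv, div_le_one hn0]
          exact_mod_cast hn
  · exact (congrArg _ (hft x)).trans (stepSum_const_mul _ _ _ _ x).symm

end IsStepFun

section UpNorm

variable {r : ℝ} {u : ℝ → ℂ}

lemma UpNormR_le_of_mem {S : ℝ} (hS : S ∈ upDecompSumsR r u) : UpNormR r u ≤ S :=
  csInf_le ⟨0, by rintro _ ⟨c, A, -, -, -, rfl⟩; exact tsum_nonneg fun _ => norm_nonneg _⟩ hS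

lemma tsum_mem_upDecompSumsR {c : ℕ → ℝ} {A : ℕ → ℝ → ℂ} (hc0 : ∀ j, 0 ≤ c j) (hc : Summable c)
    (hA : ∀ j, IsUpAtomR r (A j)) (hu : ∀ x, HasSum (fun j => (c j : ℂ) * A j x) (u x)) :
    ∑' j, c j ∈ upDecompSumsR r u := by
  have hnorm : ∀ j, ‖(c j : ℂ)‖ = c j := fun j => by
    rw [Complex.norm_real, Real.norm_of_nonneg (hc0 j)]
  exact ⟨fun j => c j, A, hA, by simpa only [hnorm] using hc, hu, by simp only [hnorm]⟩

end UpNorm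

lemma hasSum_sub_of_tendsto {E : Type*} [SeminormedAddCommGroup E] {g : ℕ → E} {l : E}
    (hg : Tendsto g atTop (nhds l)) (hs : Summable fun n => ‖g (n + 1) - g n‖) :
    HasSum (fun n => g (n + 1) - g n) (l - g 0) :=
  (hasSum_iff_tendsto_nat_of_summable_norm hs).2 <| by
    simpa only [sum_range_sub] using hg.sub_const (g 0)

section Variation

variable (p : ℝ) (v : ℝ → ℂ)

noncomputable def pVarSum (t : ℕ → ℝ) (N : ℕ) : ℝ :=
  ∑ j ∈ range N, ‖v (t (j + 1)) - v (t j)‖ ^ p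

def pVarSumsTo (x : ℝ) : Set ℝ := {S | ∃ N t, StrictMono t ∧ t N = x ∧ S = pVarSum p v t N}

/-- The variation function `ω_p(x)`, the `p`-variation of `v` on `(-∞, x]`. -/
noncomputable def pVarTo (x : ℝ) : ℝ := sSup (pVarSumsTo p v x)

noncomputable def hitTime (θ : ℝ) : ℝ := sInf {x | θ ≤ pVarTo p v x}

variable {p v}

lemma exists_concat {s t : ℕ → ℝ} (hs : StrictMono s) (ht : StrictMono t) {M : ℕ} (N : ℕ)
    (h : s M < t 0) : ∃ r : ℕ → ℝ, StrictMono r ∧ r (M + 1 + N) = t N ∧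
      pVarSum p v r (M + 1 + N) = pVarSum p v s M + ‖v (t 0) - v (s M)‖ ^ p + pVarSum p v t N := by
  set r : ℕ → ℝ := fun j => if j ≤ M then s j else t (j - (M + 1))
  have hr_le : ∀ j ≤ M, r j = s j := fun j hj => if_pos hj
  have hr_gt : ∀ i, r (M + 1 + i) = t i := fun i => by simp [r, show ¬ M + 1 + i ≤ M by omega]
  have hr_succ : r (M + 1) = t 0 := hr_gt 0
  refine ⟨r, strictMono_nat_of_lt_succ fun j => ?_, hr_gt N, ?_⟩
  · rcases lt_trichotomy j M with hj | rfl | hj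
    · rw [hr_le j hj.le, hr_le (j + 1) hj]
      exact hs (Nat.lt_succ_self j)
    · rwa [hr_le j le_rfl, hr_succ]
    · obtain ⟨i, rfl⟩ : ∃ i, j = M + 1 + i := ⟨j - (M + 1), by omega⟩
      rw [hr_gt]
      exact (ht (Nat.lt_succ_self i)).trans_eq (hr_gt (i + 1)).symm
  · rw [pVarSum, sum_range_add, sum_range_succ, hr_succ, hr_le M le_rfl]
    congr 2
    · exact sum_congr rfl fun j hj => by
        rw [hr_le j (mem_range.1 hj).le, hr_le (j + 1) (mem_range.1 hj)]
    · exact funext fun i => by rw [show M + 1 + i + 1 = M + 1 + (i + 1) from rfl, hr_gt, hr_gt]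

lemma pVarSum_nonneg (t : ℕ → ℝ) (N : ℕ) : 0 ≤ pVarSum p v t N :=
  sum_nonneg fun _ _ => by positivity

lemma VpNormR_nonneg : 0 ≤ VpNormR p v :=
  Real.sSup_nonneg fun _ ⟨_, _, _, h⟩ => h ▸ by positivity

lemma pVarSumsTo_nonempty (x : ℝ) : (pVarSumsTo p v x).Nonempty :=
  ⟨0, 0, fun n => x + n, fun _ _ h => by simpa using h, by simp, by simp [pVarSum]⟩

lemma pVarTo_nonneg (x : ℝ) : 0 ≤ pVarTo p v x :=
  Real.sSup_nonneg fun _ ⟨_, _, _, _, h⟩ => h ▸ pVarSum_nonneg _ _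

section

variable (hp : 0 < p) (hv : BddAbove (varSumsR p v))
include hp hv

lemma pVarSum_add_le {t : ℕ → ℝ} (ht : StrictMono t) (N : ℕ) :
    pVarSum p v t N + ‖v (t N)‖ ^ p ≤ VpNormR p v ^ p := by
  rw [← Real.rpow_inv_le_iff_of_pos (add_nonneg (pVarSum_nonneg t N) (by positivity))
    VpNormR_nonneg hp]
  exact le_csSup hv ⟨N, t, ht, rfl⟩

lemma bddAbove_pVarSumsTo (x : ℝ) : BddAbove (pVarSumsTo p v x) := by
  refine ⟨VpNormR p v ^ p, ?_⟩
  rintro _ ⟨N, t, ht, -, rfl⟩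
  linarith [pVarSum_add_le hp hv ht N, Real.rpow_nonneg (norm_nonneg (v (t N))) p]

lemma pVarSum_le_pVarTo {t : ℕ → ℝ} (ht : StrictMono t) (N : ℕ) :
    pVarSum p v t N ≤ pVarTo p v (t N) :=
  le_csSup (bddAbove_pVarSumsTo hp hv _) ⟨N, t, ht, rfl, rfl⟩

lemma pVarTo_add_norm_le (x : ℝ) : pVarTo p v x + ‖v x‖ ^ p ≤ VpNormR p v ^ p := by
  suffices pVarTo p v x ≤ VpNormR p v ^ p - ‖v x‖ ^ p by linarith
  refine csSup_le (pVarSumsTo_nonempty x) ?_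
  rintro _ ⟨N, t, ht, rfl, rfl⟩
  linarith [pVarSum_add_le hp hv ht N]

lemma pVarTo_le (x : ℝ) : pVarTo p v x ≤ VpNormR p v ^ p := by
  linarith [pVarTo_add_norm_le hp hv x, Real.rpow_nonneg (norm_nonneg (v x)) p]

lemma norm_le_VpNormR (x : ℝ) : ‖v x‖ ≤ VpNormR p v := by
  rw [← Real.rpow_le_rpow_iff (norm_nonneg _) VpNormR_nonneg hp]
  linarith [pVarTo_add_norm_le hp hv x, pVarTo_nonneg (p := p) (v := v) x]

lemma pVarTo_add_norm_sub_le {x y : ℝ} (hxy : x < y) :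
    pVarTo p v x + ‖v y - v x‖ ^ p ≤ pVarTo p v y := by
  suffices pVarTo p v x ≤ pVarTo p v y - ‖v y - v x‖ ^ p by linarith
  refine csSup_le (pVarSumsTo_nonempty x) ?_
  rintro _ ⟨M, s, hs, rfl, rfl⟩
  obtain ⟨r, hr, hrM, hsum⟩ :=
    exists_concat (v := v) (p := p) hs (t := fun n => y + n) (fun _ _ h => by simpa using h) 0
      (by simpa using hxy)
  have := pVarSum_le_pVarTo hp hv hr (M + 1 + 0)
  have hzero : pVarSum p v (fun n : ℕ => y + n) 0 = 0 := sum_range_zero _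
  rw [hrM, hsum, hzero, Nat.cast_zero, add_zero, add_zero] at this
  linarith

lemma pVarTo_mono : Monotone (pVarTo p v) := fun x y hxy => by
  rcases hxy.lt_or_eq with h | rfl
  · linarith [pVarTo_add_norm_sub_le hp hv h, Real.rpow_nonneg (norm_nonneg (v y - v x)) p]
  · rfl

lemma norm_rpow_le_pVarTo (h0 : Tendsto v atBot (nhds 0)) (x : ℝ) : ‖v x‖ ^ p ≤ pVarTo p v x := by
  have hlim : Tendsto (fun y => ‖v x - v y‖ ^ p) atBot (nhds (‖v x - 0‖ ^ p)) :=
    (tendsto_const_nhds.sub h0).norm.rpow_const (Or.inr hp.le)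
  rw [sub_zero] at hlim
  refine le_of_tendsto hlim ?_
  filter_upwards [eventually_lt_atBot x] with y hy
  linarith [pVarTo_add_norm_sub_le hp hv hy, pVarTo_nonneg (p := p) (v := v) y]

/-- That is, `ω_p(x) → 0` as `x → -∞`: otherwise a partition of `(-∞, 0]` that is `θ / 2`-optimal
could be extended to the left by one of variation `θ / 2`. -/
lemma bddBelow_setOf_le_pVarTo {θ : ℝ} (hθ : 0 < θ) : BddBelow {x | θ ≤ pVarTo p v x} := by
  by_contra h
  rw [not_bddBelow_iff] at h
  obtain ⟨_, ⟨N, t, ht, htN, rfl⟩, hP⟩ :=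
    exists_lt_of_lt_csSup (pVarSumsTo_nonempty 0)
      (show pVarTo p v 0 - θ / 2 < pVarTo p v 0 from sub_lt_self _ (half_pos hθ))
  obtain ⟨x, hx, hxt⟩ := h (t 0)
  obtain ⟨_, ⟨M, s, hs, rfl, rfl⟩, hQ⟩ :=
    exists_lt_of_lt_csSup (pVarSumsTo_nonempty x) ((half_lt_self hθ).trans_le hx)
  obtain ⟨r, hr, hrN, hsum⟩ := exists_concat (v := v) (p := p) hs ht N hxt
  have := pVarSum_le_pVarTo hp hv hr (M + 1 + N)
  rw [hrN, htN, hsum] at this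
  linarith [Real.rpow_nonneg (norm_nonneg (v (t 0) - v (s M))) p]

lemma hitTime_le {θ x : ℝ} (hθ : 0 < θ) (hx : θ ≤ pVarTo p v x) : hitTime p v θ ≤ x :=
  csInf_le (bddBelow_setOf_le_pVarTo hp hv hθ) hx

lemma norm_sub_hitTime_rpow_le (hrc : ∀ x, ContinuousWithinAt v (Ici x) x) {θ x : ℝ}
    (hθ : ∃ y, θ ≤ pVarTo p v y) (hx : hitTime p v θ < x) :
    ‖v x - v (hitTime p v θ)‖ ^ p ≤ pVarTo p v x - θ := by
  have hlim : Tendsto (fun a => ‖v x - v a‖ ^ p) (nhdsWithin (hitTime p v θ) (Ioi (hitTime p v θ)))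
      (nhds (‖v x - v (hitTime p v θ)‖ ^ p)) :=
    (tendsto_const_nhds.sub ((hrc _).mono Ioi_subset_Ici_self)).norm.rpow_const (Or.inr hp.le)
  refine le_of_tendsto hlim ?_
  filter_upwards [Ioo_mem_nhdsGT hx] with a ha
  obtain ⟨b, hb, hba⟩ := exists_lt_of_csInf_lt hθ ha.1
  linarith [pVarTo_add_norm_sub_le hp hv ha.2, pVarTo_mono hp hv hba.le,
    show θ ≤ pVarTo p v b from hb]

end

end Variation

section Sampling

variable (p : ℝ) (v : ℝ → ℂ)

/-- The condition `∃ y, θ ≤ ω_p(y)` discards the levels that are never reached: their `hitTime` is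
a junk value. -/
noncomputable def reachedLevels (Θ : Finset ℝ) (x : ℝ) : Finset ℝ :=
  Θ.filter fun θ => (∃ y, θ ≤ pVarTo p v y) ∧ hitTime p v θ ≤ x

noncomputable def hitTimes (Θ : Finset ℝ) : Finset ℝ :=
  (Θ.filter fun θ => ∃ y, θ ≤ pVarTo p v y).image (hitTime p v)

noncomputable def sampled (Θ : Finset ℝ) (x : ℝ) : ℂ :=
  if h : (reachedLevels p v Θ x).Nonempty then v (hitTime p v ((reachedLevels p v Θ x).max' h))
  else 0

variable {p v} {Θ : Finset ℝ}

lemma isStepFun_sampled : IsStepFun (hitTimes p v Θ) (sampled p v Θ) := by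
  have mem_hitTimes : ∀ θ ∈ Θ, (∃ y, θ ≤ pVarTo p v y) → hitTime p v θ ∈ hitTimes p v Θ :=
    fun θ hθ hne => mem_image_of_mem _ (mem_filter.2 ⟨hθ, hne⟩)
  refine ⟨fun x hx => dif_neg ?_, fun x y hxy hB => ?_⟩
  · rintro ⟨θ, hθ⟩
    obtain ⟨hθΘ, hne, hτ⟩ := mem_filter.1 hθ
    exact (hx _ (mem_hitTimes θ hθΘ hne)).not_ge hτ
  · have : reachedLevels p v Θ y = reachedLevels p v Θ x := by
      ext θ
      simp only [reachedLevels, mem_filter]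
      exact ⟨fun ⟨hθ, hne, hy⟩ => ⟨hθ, hne, hB _ (mem_hitTimes θ hθ hne) hy⟩,
        fun ⟨hθ, hne, hx⟩ => ⟨hθ, hne, hx.trans hxy⟩⟩
    simp only [sampled, this]

lemma card_hitTimes_le : #(hitTimes p v Θ) ≤ #Θ :=
  card_image_le.trans (card_filter_le _ _)

lemma hitTimes_mono {Θ' : Finset ℝ} (h : Θ ⊆ Θ') : hitTimes p v Θ ⊆ hitTimes p v Θ' :=
  image_subset_image (filter_subset_filter _ h)

variable (hp : 0 < p) (hv : BddAbove (varSumsR p v))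
include hp hv

/-- `hδ`: the levels `0 ∪ Θ` climb in steps of `δ` up to `‖v‖_{V^p} ^ p ≥ ω_p`. -/
lemma pVarTo_le_add_of_notMem {δ : ℝ} (hΘ : ∀ θ ∈ Θ, 0 < θ)
    (hδ : ∀ θ ∈ insert 0 Θ, θ + δ ∈ Θ ∨ VpNormR p v ^ p ≤ θ + δ) {θ x : ℝ} (hθ : θ ∈ insert 0 Θ)
    (hnot : θ + δ ∉ reachedLevels p v Θ x) : pVarTo p v x ≤ θ + δ := by
  by_contra! hlt
  rcases hδ θ hθ with hmem | htop
  · exact hnot (mem_filter.2 ⟨hmem, ⟨x, hlt.le⟩, hitTime_le hp hv (hΘ _ hmem) hlt.le⟩)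
  · linarith [pVarTo_le hp hv x]

lemma norm_sub_sampled_rpow_le (hrc : ∀ x, ContinuousWithinAt v (Ici x) x)
    (h0 : Tendsto v atBot (nhds 0)) {δ : ℝ} (hδ0 : 0 < δ) (hΘ : ∀ θ ∈ Θ, 0 < θ)
    (hδ : ∀ θ ∈ insert 0 Θ, θ + δ ∈ Θ ∨ VpNormR p v ^ p ≤ θ + δ) (x : ℝ) :
    ‖v x - sampled p v Θ x‖ ^ p ≤ δ := by
  rw [sampled]
  split_ifs with h
  · set θ := (reachedLevels p v Θ x).max' h
    obtain ⟨hθΘ, hne, hτ⟩ := mem_filter.1 ((reachedLevels p v Θ x).max'_mem h)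
    have hx : pVarTo p v x ≤ θ + δ := pVarTo_le_add_of_notMem hp hv hΘ hδ (mem_insert_of_mem hθΘ)
      fun hmem => by linarith [(reachedLevels p v Θ x).le_max' _ hmem]
    rcases hτ.lt_or_eq with hlt | heq
    · linarith [norm_sub_hitTime_rpow_le hp hv hrc hne hlt]
    · rw [heq, sub_self, norm_zero, Real.zero_rpow hp.ne']
      exact hδ0.le
  · have hx := pVarTo_le_add_of_notMem hp hv hΘ hδ (mem_insert_self 0 Θ) fun hmem => h ⟨_, hmem⟩
    rw [sub_zero]
    linarith [norm_rpow_le_pVarTo hp hv h0 x]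

end Sampling

section Dyadic

variable (p : ℝ) (v : ℝ → ℂ)

noncomputable def dyadicLevels (k : ℕ) : Finset ℝ :=
  (Finset.Ico 1 (2 ^ k)).image fun i : ℕ => i * VpNormR p v ^ p / 2 ^ k

noncomputable def approx (k : ℕ) : ℝ → ℂ := sampled p v (dyadicLevels p v k)

variable {p v}

lemma dyadicLevels_subset (k : ℕ) : dyadicLevels p v k ⊆ dyadicLevels p v (k + 1) := by
  intro θ hθ
  obtain ⟨i, hi, rfl⟩ := mem_image.1 hθ
  obtain ⟨hi1, hi2⟩ := mem_Ico.1 hi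
  refine mem_image.2 ⟨2 * i, mem_Ico.2 ⟨by omega, by rw [pow_succ]; omega⟩, ?_⟩
  push_cast
  rw [pow_succ]
  field_simp

lemma card_dyadicLevels_le (k : ℕ) : #(dyadicLevels p v k) ≤ 2 ^ k :=
  card_image_le.trans (by simp)

lemma dyadicLevels_pos (hW : 0 < VpNormR p v) {k : ℕ} : ∀ θ ∈ dyadicLevels p v k, 0 < θ := by
  intro θ hθ
  obtain ⟨i, hi, rfl⟩ := mem_image.1 hθ
  have : (1 : ℝ) ≤ i := by exact_mod_cast (mem_Ico.1 hi).1
  positivity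

lemma dyadicLevels_step (k : ℕ) : ∀ θ ∈ insert 0 (dyadicLevels p v k),
    θ + VpNormR p v ^ p / 2 ^ k ∈ dyadicLevels p v k ∨
      VpNormR p v ^ p ≤ θ + VpNormR p v ^ p / 2 ^ k := by
  intro θ hθ
  obtain ⟨i, hi, rfl⟩ : ∃ i : ℕ, i < 2 ^ k ∧ (i : ℝ) * VpNormR p v ^ p / 2 ^ k = θ := by
    rcases mem_insert.1 hθ with rfl | hθ
    · exact ⟨0, by positivity, by simp⟩
    · obtain ⟨i, hi, rfl⟩ := mem_image.1 hθ
      exact ⟨i, (mem_Ico.1 hi).2, rfl⟩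
  have hnext : (i : ℝ) * VpNormR p v ^ p / 2 ^ k + VpNormR p v ^ p / 2 ^ k
      = ((i + 1 : ℕ) : ℝ) * VpNormR p v ^ p / 2 ^ k := by push_cast; ring
  rw [hnext]
  rcases (show i + 1 ≤ 2 ^ k from hi).lt_or_eq with hlt | heq
  · exact Or.inl (mem_image.2 ⟨i + 1, mem_Ico.2 ⟨by omega, hlt⟩, rfl⟩)
  · exact Or.inr (le_of_eq (by rw [heq]; push_cast; field_simp))

lemma approx_zero : approx p v 0 = 0 := by
  ext x
  simp [approx, sampled, reachedLevels, dyadicLevels]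

lemma isStepFun_approx_succ_sub (k : ℕ) :
    IsStepFun (hitTimes p v (dyadicLevels p v (k + 1))) (approx p v (k + 1) - approx p v k) :=
  isStepFun_sampled.sub (isStepFun_sampled.mono (hitTimes_mono (dyadicLevels_subset k)))

variable (hp : 0 < p) (hv : BddAbove (varSumsR p v))
  (hrc : ∀ x, ContinuousWithinAt v (Ici x) x) (h0 : Tendsto v atBot (nhds 0))
include hp hv hrc h0

lemma norm_sub_approx_rpow_le (k : ℕ) (x : ℝ) :
    ‖v x - approx p v k x‖ ^ p ≤ VpNormR p v ^ p / 2 ^ k := by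
  rcases VpNormR_nonneg.eq_or_lt with hW | hW
  · have hv0 : ∀ y, v y = 0 := fun y => norm_le_zero_iff.1 (hW ▸ norm_le_VpNormR hp hv y)
    have happrox : approx p v k x = 0 := by
      rw [approx, sampled]
      split_ifs <;> simp [hv0]
    simp [hv0, happrox, ← hW, Real.zero_rpow hp.ne']
  exact norm_sub_sampled_rpow_le hp hv hrc h0 (by positivity) (dyadicLevels_pos hW)
    (dyadicLevels_step k) x

lemma norm_sub_approx_le (k : ℕ) (x : ℝ) :
    ‖v x - approx p v k x‖ ≤ VpNormR p v / ((2 : ℝ) ^ p⁻¹) ^ k := by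
  have hW := VpNormR_nonneg (p := p) (v := v)
  have h := (Real.le_rpow_inv_iff_of_pos (norm_nonneg _) (by positivity) hp).2
    (norm_sub_approx_rpow_le hp hv hrc h0 k x)
  rwa [Real.div_rpow (by positivity) (by positivity),
    Real.rpow_rpow_inv VpNormR_nonneg hp.ne', ← Real.rpow_pow_comm zero_le_two] at h

lemma norm_approx_succ_sub_le (k : ℕ) (x : ℝ) :
    ‖approx p v (k + 1) x - approx p v k x‖ ≤ 2 * VpNormR p v / ((2 : ℝ) ^ p⁻¹) ^ k := by
  have hσ : 1 ≤ (2 : ℝ) ^ p⁻¹ := Real.one_le_rpow one_le_two (inv_nonneg.2 hp.le)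
  have hnext : VpNormR p v / ((2 : ℝ) ^ p⁻¹) ^ (k + 1) ≤ VpNormR p v / ((2 : ℝ) ^ p⁻¹) ^ k :=
    div_le_div_of_nonneg_left VpNormR_nonneg (by positivity) (pow_le_pow_right₀ hσ k.le_succ)
  calc ‖approx p v (k + 1) x - approx p v k x‖
      = ‖(v x - approx p v k x) - (v x - approx p v (k + 1) x)‖ := by ring_nf
    _ ≤ ‖v x - approx p v k x‖ + ‖v x - approx p v (k + 1) x‖ := norm_sub_le _ _
    _ ≤ VpNormR p v / ((2 : ℝ) ^ p⁻¹) ^ k + VpNormR p v / ((2 : ℝ) ^ p⁻¹) ^ k :=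
        add_le_add (norm_sub_approx_le hp hv hrc h0 k x)
          ((norm_sub_approx_le hp hv hrc h0 (k + 1) x).trans hnext)
    _ = 2 * VpNormR p v / ((2 : ℝ) ^ p⁻¹) ^ k := by ring

/-- The coefficient is `(2 ^ (k + 1)) ^ (1 / r) * (2 * 2 ^ (-k / p) * ‖v‖_{V^p})`: at most
`2 ^ (k + 1)` jumps, each of size at most `2 * 2 ^ (-k / p) * ‖v‖_{V^p}`. -/
lemma exists_isUpAtomR_approx_succ_sub {r : ℝ} (hr : 0 < r) (k : ℕ) :
    ∃ A, IsUpAtomR r A ∧ ∀ x, approx p v (k + 1) x - approx p v k x =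
      (2 * (2 : ℝ) ^ r⁻¹ * VpNormR p v * ((2 : ℝ) ^ r⁻¹ / (2 : ℝ) ^ p⁻¹) ^ k : ℝ) * A x := by
  obtain ⟨A, hA, hfA⟩ := (isStepFun_approx_succ_sub k).exists_isUpAtomR hr
    (norm_approx_succ_sub_le hp hv hrc h0 k) (card_hitTimes_le.trans (card_dyadicLevels_le (k + 1)))
  have hc : ((2 ^ (k + 1) : ℕ) : ℝ) ^ r⁻¹ * (2 * VpNormR p v / ((2 : ℝ) ^ p⁻¹) ^ k) =
      2 * (2 : ℝ) ^ r⁻¹ * VpNormR p v * ((2 : ℝ) ^ r⁻¹ / (2 : ℝ) ^ p⁻¹) ^ k := by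
    push_cast
    rw [← Real.rpow_pow_comm zero_le_two, pow_succ, div_pow]
    ring
  exact ⟨A, hA, fun x => (hfA x).trans (by rw [hc])⟩

lemma tendsto_approx (x : ℝ) : Tendsto (fun k => approx p v k x) atTop (nhds (v x)) := by
  rw [tendsto_iff_norm_sub_tendsto_zero]
  refine squeeze_zero (g := fun k => VpNormR p v / ((2 : ℝ) ^ p⁻¹) ^ k) (fun _ => norm_nonneg _)
    (fun k => ?_)
    (tendsto_const_nhds.div_atTop (tendsto_pow_atTop_atTop_of_one_lt
      (Real.one_lt_rpow one_lt_two (inv_pos.2 hp))))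
  rw [norm_sub_rev]
  exact norm_sub_approx_le hp hv hrc h0 k x

lemma hasSum_approx_succ_sub (K : ℕ) (x : ℝ) :
    HasSum (fun j => approx p v (K + j + 1) x - approx p v (K + j) x) (v x - approx p v K x) := by
  have hσ1 : 1 < (2 : ℝ) ^ p⁻¹ := Real.one_lt_rpow one_lt_two (inv_pos.2 hp)
  have hgeom := (summable_geometric_of_lt_one (inv_nonneg.2 (by positivity))
    (inv_lt_one_of_one_lt₀ hσ1)).mul_left (2 * VpNormR p v / ((2 : ℝ) ^ p⁻¹) ^ K)
  refine hasSum_sub_of_tendsto (g := fun j => approx p v (K + j) x)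
    ((tendsto_approx hp hv hrc h0 x).comp ((tendsto_add_atTop_nat K).congr fun j => add_comm j K))
    (Summable.of_nonneg_of_le (fun _ => norm_nonneg _)
      (fun j => (norm_approx_succ_sub_le hp hv hrc h0 (K + j) x).trans_eq ?_) hgeom)
  rw [pow_add, inv_pow]
  field_simp

lemma exists_mem_upDecompSumsR_approx (K : ℕ) :
    ∃ S ∈ upDecompSumsR p (approx p v K), S ≤ 2 * (2 : ℝ) ^ p⁻¹ * VpNormR p v * K := by
  choose A hA hD using exists_isUpAtomR_approx_succ_sub hp hv hrc h0 hp
  have hσ : (2 : ℝ) ^ p⁻¹ ≠ 0 := by positivity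
  set c : ℕ → ℝ := fun j => if j < K then 2 * (2 : ℝ) ^ p⁻¹ * VpNormR p v else 0
  have hc0 : ∀ j, 0 ≤ c j := fun j => by
    have := VpNormR_nonneg (p := p) (v := v)
    simp only [c]; split_ifs <;> positivity
  have hc_eq : ∀ j ∉ range K, c j = 0 := fun j hj => if_neg (by simpa using hj)
  have hsum : ∀ x, HasSum (fun j => (c j : ℂ) * A j x) (approx p v K x) := fun x => by
    have hterm : ∀ j ∈ range K, (c j : ℂ) * A j x = approx p v (j + 1) x - approx p v j x :=
      fun j hj => by simp only [c, if_pos (mem_range.1 hj), hD j x, div_self hσ, one_pow, mul_one]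
    have : HasSum (fun j => (c j : ℂ) * A j x) (∑ j ∈ range K, (c j : ℂ) * A j x) :=
      hasSum_sum_of_ne_finset_zero fun j hj => by simp [hc_eq j hj]
    rwa [sum_congr rfl hterm, sum_range_sub (approx p v · x), approx_zero, Pi.zero_apply,
      sub_zero] at this
  refine ⟨_, tsum_mem_upDecompSumsR hc0 (summable_of_ne_finset_zero hc_eq) hA hsum, le_of_eq ?_⟩
  rw [tsum_eq_sum hc_eq, sum_congr rfl fun j hj => if_pos (mem_range.1 hj), sum_const, card_range,
    nsmul_eq_mul]
  ring

lemma exists_mem_upDecompSumsR_sub_approx {q : ℝ} (hpq : p < q) (K : ℕ) :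
    ∃ S ∈ upDecompSumsR q (v - approx p v K), S ≤ 2 * (2 : ℝ) ^ q⁻¹ * VpNormR p v *
      ((2 : ℝ) ^ q⁻¹ / (2 : ℝ) ^ p⁻¹) ^ K / (1 - (2 : ℝ) ^ q⁻¹ / (2 : ℝ) ^ p⁻¹) := by
  choose A hA hD using exists_isUpAtomR_approx_succ_sub hp hv hrc h0 (hp.trans hpq)
  set ρ := (2 : ℝ) ^ q⁻¹ / (2 : ℝ) ^ p⁻¹
  have hρ0 : 0 ≤ ρ := by positivity
  have hρ1 : ρ < 1 := (div_lt_one (by positivity)).2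
    (Real.rpow_lt_rpow_of_exponent_lt one_lt_two (inv_strictAnti₀ hp hpq))
  set a := 2 * (2 : ℝ) ^ q⁻¹ * VpNormR p v
  have ha : 0 ≤ a := by have := VpNormR_nonneg (p := p) (v := v); positivity
  have hsum : ∀ x, HasSum (fun j => ((a * ρ ^ K * ρ ^ j : ℝ) : ℂ) * A (K + j) x)
      (v x - approx p v K x) := fun x => by
    convert hasSum_approx_succ_sub hp hv hrc h0 K x using 2 with j
    rw [hD, pow_add, mul_assoc a]
  refine ⟨_, tsum_mem_upDecompSumsR (fun j => by positivity)
    ((summable_geometric_of_lt_one hρ0 hρ1).mul_left (a * ρ ^ K)) (fun j => hA (K + j)) hsum,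
    le_of_eq ?_⟩
  rw [tsum_mul_left, tsum_geometric_of_lt_one hρ0 hρ1, div_eq_mul_inv]

end Dyadic

/-- The choice `K = ⌈M / log (1 / ρ)⌉`. -/
lemma exists_nat_inv_mul_le_and_exp_mul_pow_le {ρ M : ℝ} (hρ0 : 0 < ρ) (hρ1 : ρ < 1) (hM : 1 ≤ M) :
    ∃ K : ℕ, M⁻¹ * K ≤ (-Real.log ρ)⁻¹ + 1 ∧ Real.exp M * ρ ^ K ≤ 1 := by
  set L := -Real.log ρ
  have hL : 0 < L := neg_pos.2 (Real.log_neg hρ0 hρ1)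
  have hM0 : 0 < M := zero_lt_one.trans_le hM
  refine ⟨⌈M / L⌉₊, ?_, ?_⟩
  · calc M⁻¹ * ⌈M / L⌉₊ ≤ M⁻¹ * (M / L + 1) := by
          gcongr
          exact (Nat.ceil_lt_add_one (by positivity)).le
      _ = L⁻¹ + M⁻¹ := by field_simp
      _ ≤ L⁻¹ + 1 := by gcongr; exact inv_le_one_of_one_le₀ hM
  · have hK : M ≤ ⌈M / L⌉₊ * L := (div_le_iff₀ hL).1 (Nat.le_ceil _)
    rw [← Real.exp_log hρ0, ← Real.exp_nat_mul, ← Real.exp_add, Real.exp_le_one_iff]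
    linarith

end VpInterpolation

open VpInterpolation in
/-- **interpolation between `U^p` and `U^q` via `V^p`.**
Let `1 < p < q < ∞`.  There is a constant `C` such that for every right-continuous
`v ∈ V^p` vanishing at `-∞` and every `M > 1` there are `u ∈ U^p` and `w ∈ U^q` with
`v = u + w` and `(1/M) ‖u‖_{U^p} + e^M ‖w‖_{U^q} ≤ C ‖v‖_{V^p}`
(in particular `V^p_{rc} ⊂ U^q`). -/
theorem stmt_15 (p q : ℝ) (hp : 1 < p) (hpq : p < q) :
    ∃ C : ℝ, 0 < C ∧ ∀ (v : ℝ → ℂ) (M : ℝ), 1 < M →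
      (∀ x : ℝ, ContinuousWithinAt v (Set.Ici x) x) →
      Tendsto v atBot (nhds 0) →
      BddAbove (varSumsR p v) →
      ∃ u w : ℝ → ℂ, (∀ x, v x = u x + w x) ∧
        (upDecompSumsR p u).Nonempty ∧ (upDecompSumsR q w).Nonempty ∧
        M⁻¹ * UpNormR p u + Real.exp M * UpNormR q w ≤ C * VpNormR p v := by
  have hp0 : 0 < p := zero_lt_one.trans hp
  set σ := (2 : ℝ) ^ p⁻¹
  set τ := (2 : ℝ) ^ q⁻¹
  have hρ0 : 0 < τ / σ := by positivity
  have hρ1 : τ / σ < 1 :=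
    (div_lt_one (by positivity)).2
      (Real.rpow_lt_rpow_of_exponent_lt one_lt_two (inv_strictAnti₀ hp0 hpq))
  have hL : 0 < (-Real.log (τ / σ))⁻¹ := inv_pos.2 (neg_pos.2 (Real.log_neg hρ0 hρ1))
  have h1ρ : 0 < 1 - τ / σ := sub_pos.2 hρ1
  refine ⟨2 * σ * ((-Real.log (τ / σ))⁻¹ + 1) + 2 * τ / (1 - τ / σ), by positivity, ?_⟩
  intro v M hM hrc h0 hv
  obtain ⟨K, hKM, hKexp⟩ := exists_nat_inv_mul_le_and_exp_mul_pow_le hρ0 hρ1 hM.le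
  obtain ⟨S, hS, hS_le⟩ := exists_mem_upDecompSumsR_approx hp0 hv hrc h0 K
  obtain ⟨T, hT, hT_le⟩ := exists_mem_upDecompSumsR_sub_approx hp0 hv hrc h0 hpq K
  have hW := VpNormR_nonneg (p := p) (v := v)
  refine ⟨approx p v K, v - approx p v K, fun x => by simp, ⟨S, hS⟩, ⟨T, hT⟩, ?_⟩
  calc M⁻¹ * UpNormR p (approx p v K) + Real.exp M * UpNormR q (v - approx p v K)
      ≤ M⁻¹ * (2 * σ * VpNormR p v * K) +
          Real.exp M * (2 * τ * VpNormR p v * (τ / σ) ^ K / (1 - τ / σ)) := by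
        gcongr
        exacts [(UpNormR_le_of_mem hS).trans hS_le, (UpNormR_le_of_mem hT).trans hT_le]
    _ = 2 * σ * VpNormR p v * (M⁻¹ * K) +
          Real.exp M * (τ / σ) ^ K * (2 * τ * VpNormR p v / (1 - τ / σ)) := by ring
    _ ≤ 2 * σ * VpNormR p v * ((-Real.log (τ / σ))⁻¹ + 1) +
          1 * (2 * τ * VpNormR p v / (1 - τ / σ)) := by gcongr
    _ = _ := by ring
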